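/- Let 1 ≤ d_1 ≤ d_2 ≤ d_3 be integers with d_2 − d_1 < d_3 < d_1 + d_2. Then the polynomial f_{d_1}·f_{d_2}·f_{d_3} is strictly unimodal. -/
import Mathlib


open Polynomial

/-- `fpoly d` is the polynomial `f_d = 1 + t + t^2 + ⋯ + t^d`. -/
noncomputable def fpoly (d : ℕ) : Polynomial ℝ :=
  ∑ i ∈ Finset.range (d + 1), Polynomial.X ^ i

/-- A sequence `a_0, …, a_d` is strictly unimodal if, for `d = 2m`,
`a_0 < a_1 < ⋯ < a_m > a_{m+1} > ⋯ > a_{2m}`, and for `d = 2m+1`,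
`a_0 < a_1 < ⋯ < a_m = a_{m+1} > a_{m+2} > ⋯ > a_{2m+1}`. -/
def StrictlyUnimodalSeq (d : ℕ) (a : ℕ → ℝ) : Prop :=
  (∀ i, i < d / 2 → a i < a (i + 1)) ∧
  (Odd d → a (d / 2) = a (d / 2 + 1)) ∧
  (∀ i, (d + 1) / 2 ≤ i → i < d → a (i + 1) < a i)

/-- The sequence `a` strictly increases on `[0, e]`, is constant on `[e, p]`,
and strictly decreases on `[p, D]`. -/
def IncConstDec (a : ℕ → ℝ) (e p D : ℕ) : Prop :=
  (∀ i, i < e → a i < a (i + 1)) ∧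
  (∀ i, e ≤ i → i < p → a i = a (i + 1)) ∧
  (∀ i, p ≤ i → i < D → a (i + 1) < a i)

/-- The coefficients of `fpoly d` are the indicator of `[0, d]`. -/
lemma coeff_fpoly (d n : ℕ) : (fpoly d).coeff n = if n ≤ d then 1 else 0 := by
  simp [fpoly, Polynomial.finset_sum_coeff, coeff_X_pow, Nat.lt_succ_iff]

/-- Key recurrence: multiplying by `fpoly d` turns coefficient differences into a
windowed difference, via the identity `fpoly d * (X - 1) = X^(d+1) - 1`. -/
lemma key (Q : Polynomial ℝ) (d n : ℕ) :
    (Q * fpoly d).coeff (n+1) - (Q * fpoly d).coeff n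
      = Q.coeff (n+1) - (if d + 1 ≤ n + 1 then Q.coeff (n - d) else 0) := by
  have h : (Q * fpoly d) * (X - 1) = Q * X ^ (d+1) - Q := by
    rw [mul_assoc, fpoly, geom_sum_mul]; ring
  have h2 := congrArg (fun p => p.coeff (n+1)) h
  simp only [mul_sub, mul_one, coeff_sub, coeff_mul_X, coeff_mul_X_pow',
    Nat.succ_sub_succ] at h2
  linarith [h2]

/-- Closed form (as an integer) for the coefficients of `fpoly d₁ * fpoly d₂`. -/
def Bfun (d₁ d₂ n : ℕ) : ℤ :=
  if n ≤ d₁ + d₂ then min (n:ℤ) d₁ + min (n:ℤ) d₂ + 1 - n else 0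

lemma coeff_fpoly_mul (d₁ d₂ n : ℕ) :
    (fpoly d₁ * fpoly d₂).coeff n = (Bfun d₁ d₂ n : ℝ) := by
  induction n with
  | zero =>
    simp [Bfun, Polynomial.mul_coeff_zero, coeff_fpoly]
  | succ n ih =>
    have h := key (fpoly d₁) d₂ n
    rw [ih] at h
    simp only [coeff_fpoly] at h
    have hBz : Bfun d₁ d₂ (n+1) = Bfun d₁ d₂ n +
        ((if n+1 ≤ d₁ then (1:ℤ) else 0) -
          if d₂ + 1 ≤ n + 1 then (if n - d₂ ≤ d₁ then (1:ℤ) else 0) else 0) := by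
      simp only [Bfun, min_def]
      split_ifs <;> omega
    have hB : (Bfun d₁ d₂ (n+1) : ℝ) = (Bfun d₁ d₂ n : ℝ) +
        ((if n+1 ≤ d₁ then (1:ℝ) else 0) -
          if d₂ + 1 ≤ n + 1 then (if n - d₂ ≤ d₁ then (1:ℝ) else 0) else 0) := by
      rw [hBz]; push_cast; split_ifs <;> norm_num
    linarith [h, hB]

/-- For `1 ≤ d₁ ≤ d₂ ≤ d₃` with `d₂ - d₁ < d₃ < d₁ + d₂`, the polynomial
`f_{d₁}·f_{d₂}·f_{d₃}` is strictly unimodal. -/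
theorem fpoly_triple_mul_strictlyUnimodal (d₁ d₂ d₃ : ℕ)
    (h1 : 1 ≤ d₁) (h12 : d₁ ≤ d₂) (h23 : d₂ ≤ d₃)
    (hlow : d₂ - d₁ < d₃) (hhigh : d₃ < d₁ + d₂) :
    StrictlyUnimodalSeq (d₁ + d₂ + d₃) ((fpoly d₁ * fpoly d₂ * fpoly d₃).coeff) := by
  have hdiff : ∀ n : ℕ,
      (fpoly d₁ * fpoly d₂ * fpoly d₃).coeff (n+1)
        - (fpoly d₁ * fpoly d₂ * fpoly d₃).coeff n
      = ((Bfun d₁ d₂ (n+1)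
          - if d₃ + 1 ≤ n + 1 then Bfun d₁ d₂ (n - d₃) else 0 : ℤ) : ℝ) := by
    intro n
    have h := key (fpoly d₁ * fpoly d₂) d₃ n
    simp only [coeff_fpoly_mul] at h
    rw [h]
    push_cast
    split_ifs <;> ring
  refine ⟨?_, ?_, ?_⟩
  · intro i hi
    have h := hdiff i
    have hz : 0 < Bfun d₁ d₂ (i+1)
        - (if d₃ + 1 ≤ i + 1 then Bfun d₁ d₂ (i - d₃) else 0) := by
      simp only [Bfun, min_def]
      split_ifs <;> omega
    have hz' : (0:ℝ) < ((Bfun d₁ d₂ (i+1)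
        - if d₃ + 1 ≤ i + 1 then Bfun d₁ d₂ (i - d₃) else 0 : ℤ) : ℝ) := by
      exact_mod_cast hz
    linarith [h, hz']
  · intro hodd
    obtain ⟨k, hk⟩ := hodd
    have h := hdiff ((d₁ + d₂ + d₃) / 2)
    have hz : Bfun d₁ d₂ ((d₁ + d₂ + d₃) / 2 + 1)
        - (if d₃ + 1 ≤ (d₁ + d₂ + d₃) / 2 + 1 then
            Bfun d₁ d₂ ((d₁ + d₂ + d₃) / 2 - d₃) else 0) = 0 := by
      simp only [Bfun, min_def]
      split_ifs <;> omega
    have hz' : ((Bfun d₁ d₂ ((d₁ + d₂ + d₃) / 2 + 1)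
        - if d₃ + 1 ≤ (d₁ + d₂ + d₃) / 2 + 1 then
            Bfun d₁ d₂ ((d₁ + d₂ + d₃) / 2 - d₃) else 0 : ℤ) : ℝ) = 0 := by
      exact_mod_cast hz
    linarith [h, hz']
  · intro i hi hi'
    have h := hdiff i
    have hz : Bfun d₁ d₂ (i+1)
        - (if d₃ + 1 ≤ i + 1 then Bfun d₁ d₂ (i - d₃) else 0) < 0 := by
      simp only [Bfun, min_def]
      split_ifs <;> omega
    have hz' : ((Bfun d₁ d₂ (i+1)
        - if d₃ + 1 ≤ i + 1 then Bfun d₁ d₂ (i - d₃) else 0 : ℤ) : ℝ) < 0 := by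
      exact_mod_cast hz
    linarith [h, hz']
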